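/- arXiv:2112.14767 — 3 statements merged into one kernel-verified Lean document; each statement's English description precedes it below -/
import Mathlib

section
/- For every α > 0 and q ∈ (1,∞) with α < 1 − 3/q, the planar radial stretch map φ(x) = x|x|^{α−1} on the unit disk 𝔻 does not belong to the fractional Sobolev space W^{1−1/q, q}(𝔻, ℝ²); that is, ∫_𝔻 ∫_𝔻 |φ(x) − φ(y)|^q / |x − y|^{q+1} dx dy = ∞. -/
/-!
Fix `x ≠ 0` in the disc and put `r = ‖x‖`. On the half disc `{‖y‖ ≤ r, ⟪x, y⟫ ≤ 0}`, of area
`π r² / 2`, the radial stretch preserves the sign of `⟪x, y⟫`, so `φ x` and `φ y` make an obtuse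
angle at the origin and `‖φ x - φ y‖ ≥ ‖φ x‖ = r ^ α`, while `‖x - y‖ ≤ 2 r`. Hence the inner
integral is at least a constant times `r ^ (α q + 1 - q)`, and `α < 1 - 3 / q` says exactly that
this exponent is below `-2`, so that `‖x‖ ^ (α q + 1 - q)` is not integrable near the origin of
the plane.
-/

open MeasureTheory

/-- The planar radial stretch `φ(x) = x |x|^{α−1}` (with `φ(0) = 0`). -/
noncomputable def radialStretch (α : ℝ) (x : EuclideanSpace ℝ (Fin 2)) :
    EuclideanSpace ℝ (Fin 2) := ‖x‖ ^ (α - 1) • x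

open Metric Module
open scoped ENNReal RealInnerProductSpace

section InnerProductSpace

variable {E : Type*} [NormedAddCommGroup E] [InnerProductSpace ℝ E]

theorem norm_le_norm_sub_of_inner_nonpos {a b : E} (h : ⟪a, b⟫ ≤ 0) : ‖a‖ ≤ ‖a - b‖ := by
  rw [← sq_le_sq₀ (norm_nonneg _) (norm_nonneg _), norm_sub_sq_real]
  nlinarith [sq_nonneg ‖b‖]

theorem measure_le_two_mul_measure_inter_inner_nonpos [MeasurableSpace E] [MeasurableNeg E]
    (μ : Measure E) [μ.IsNegInvariant] (x : E) {s : Set E} (hs : ∀ y ∈ s, -y ∈ s) :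
    μ s ≤ 2 * μ (s ∩ {y | ⟪x, y⟫ ≤ 0}) := by
  set H := s ∩ {y | ⟪x, y⟫ ≤ 0}
  have hcover : s ⊆ H ∪ Neg.neg ⁻¹' H := by
    intro y hy
    rcases le_total ⟪x, y⟫ 0 with h | h
    · exact Or.inl ⟨hy, h⟩
    · exact Or.inr ⟨hs y hy, by simpa [inner_neg_right] using h⟩
  calc μ s ≤ μ (H ∪ Neg.neg ⁻¹' H) := measure_mono hcover
    _ ≤ μ H + μ (Neg.neg ⁻¹' H) := measure_union_le _ _
    _ = 2 * μ H := by rw [Measure.measure_preimage_neg, two_mul]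

end InnerProductSpace

section FiniteDimensional

variable {E : Type*} [NormedAddCommGroup E] [NormedSpace ℝ E] [FiniteDimensional ℝ E]
  [Nontrivial E] [MeasurableSpace E] [BorelSpace E] (μ : Measure E) [μ.IsAddHaarMeasure]

theorem integrableOn_ball_norm_rpow_iff {p r : ℝ} (hr : 0 < r) :
    IntegrableOn (fun x : E ↦ ‖x‖ ^ p) (ball 0 r) μ ↔ -(finrank ℝ E : ℝ) < p := by
  rw [integrableOn_fun_norm_addHaar μ (f := fun y ↦ y ^ p),
    integrableOn_congr_fun (g := fun y ↦ y ^ ((finrank ℝ E : ℝ) - 1 + p)) _ measurableSet_Ioo,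
    intervalIntegral.integrableOn_Ioo_rpow_iff hr]
  · constructor <;> intro h <;> linarith
  · rintro y ⟨hy, -⟩
    simp only [smul_eq_mul]
    rw [Real.rpow_add hy, ← Real.rpow_natCast, Nat.cast_sub finrank_pos, Nat.cast_one]

theorem lintegral_ball_norm_rpow_eq_top {p r : ℝ} (hr : 0 < r) (hp : p ≤ -(finrank ℝ E : ℝ)) :
    ∫⁻ x in ball 0 r, ENNReal.ofReal (‖x‖ ^ p) ∂μ = ∞ := by
  by_contra hne
  have hint := (lintegral_ofReal_ne_top_iff_integrable
    (measurable_norm.pow_const p).aestronglyMeasurable (ae_of_all _ fun x ↦ by positivity)).1 hne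
  exact hp.not_gt ((integrableOn_ball_norm_rpow_iff μ hr).1 hint)

end FiniteDimensional

/-- Integrand of the Gagliardo seminorm of order `s = 1 - 1/q` in the plane: `q + 1 = 2 + s q`. -/
noncomputable def gagliardoKernel {E F : Type*} [NormedAddCommGroup E] [NormedAddCommGroup F]
    (q : ℝ) (f : E → F) (x y : E) : ℝ≥0∞ :=
  ENNReal.ofReal (‖f x - f y‖ ^ q / ‖x - y‖ ^ (q + 1))

local notation "ℝ²" => EuclideanSpace ℝ (Fin 2)

theorem norm_radialStretch (α : ℝ) {x : ℝ²} (hx : x ≠ 0) : ‖radialStretch α x‖ = ‖x‖ ^ α := by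
  rw [radialStretch, norm_smul, Real.norm_of_nonneg (by positivity),
    ← Real.rpow_add_one (norm_ne_zero_iff.2 hx), sub_add_cancel]

theorem inner_radialStretch (α : ℝ) (x y : ℝ²) :
    ⟪radialStretch α x, radialStretch α y⟫ = ‖x‖ ^ (α - 1) * (‖y‖ ^ (α - 1) * ⟪x, y⟫) := by
  rw [radialStretch, radialStretch, real_inner_smul_left, real_inner_smul_right]

theorem rpow_norm_le_norm_radialStretch_sub {α : ℝ} {x y : ℝ²} (hx : x ≠ 0) (hxy : ⟪x, y⟫ ≤ 0) :
    ‖x‖ ^ α ≤ ‖radialStretch α x - radialStretch α y‖ := by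
  rw [← norm_radialStretch α hx]
  refine norm_le_norm_sub_of_inner_nonpos ?_
  rw [inner_radialStretch]
  exact mul_nonpos_of_nonneg_of_nonpos (by positivity)
    (mul_nonpos_of_nonneg_of_nonpos (by positivity) hxy)

theorem le_gagliardoKernel_radialStretch {q α : ℝ} (hq : 0 ≤ q) {x y : ℝ²} (hx : x ≠ 0)
    (hy : ‖y‖ ≤ ‖x‖) (hxy : ⟪x, y⟫ ≤ 0) :
    ENNReal.ofReal (‖x‖ ^ (α * q) / (2 * ‖x‖) ^ (q + 1)) ≤
      gagliardoKernel q (radialStretch α) x y := by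
  have hne : x ≠ y := by
    rintro rfl
    exact (real_inner_self_pos.2 hx).not_ge hxy
  have hdist : ‖x - y‖ ≤ 2 * ‖x‖ := by
    linarith [norm_sub_le x y]
  apply ENNReal.ofReal_le_ofReal
  rw [Real.rpow_mul (norm_nonneg x)]
  gcongr
  · exact Real.rpow_pos_of_pos (norm_sub_pos_iff.2 hne) _
  · exact rpow_norm_le_norm_radialStretch_sub hx hxy

theorem rpow_div_two_mul_rpow_mul_sq {r : ℝ} (hr : 0 < r) (a q : ℝ) :
    r ^ a / (2 * r) ^ (q + 1) * r ^ 2 = r ^ (a + 1 - q) * 2 ^ (-(q + 1)) := by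
  rw [Real.mul_rpow zero_le_two hr.le, Real.rpow_neg zero_le_two,
    show a + 1 - q = a + 2 - (q + 1) by ring, Real.rpow_sub hr, Real.rpow_add hr a 2,
    ← Real.rpow_natCast r 2, Nat.cast_ofNat]
  field_simp

theorem le_lintegral_gagliardoKernel_radialStretch {q α : ℝ} (hq : 0 ≤ q) {x : ℝ²}
    (hx : x ≠ 0) (hx1 : ‖x‖ < 1) :
    ENNReal.ofReal (‖x‖ ^ (α * q + 1 - q)) *
        (ENNReal.ofReal (2 ^ (-(q + 1))) * volume (ball (0 : ℝ²) 1) / 2) ≤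
      ∫⁻ y in ball 0 1, gagliardoKernel q (radialStretch α) x y := by
  set r := ‖x‖
  set c := ENNReal.ofReal (r ^ (α * q) / (2 * r) ^ (q + 1))
  set S := closedBall (0 : ℝ²) r ∩ {y | ⟪x, y⟫ ≤ 0}
  have hr : 0 < r := norm_pos_iff.2 hx
  have hS : MeasurableSet S :=
    measurableSet_closedBall.inter (measurableSet_le (by fun_prop) measurable_const)
  have hS_sub : S ⊆ ball 0 1 := fun y hy ↦
    mem_ball_zero_iff.2 ((mem_closedBall_zero_iff.1 hy.1).trans_lt hx1)
  have hS_vol : ENNReal.ofReal (r ^ 2) * volume (ball (0 : ℝ²) 1) ≤ 2 * volume S := by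
    have hball := Measure.addHaar_closedBall volume (0 : ℝ²) hr.le
    rw [finrank_euclideanSpace_fin] at hball
    rw [← hball]
    exact measure_le_two_mul_measure_inter_inner_nonpos volume x fun y hy ↦ by simpa using hy
  calc
    _ = c * (ENNReal.ofReal (r ^ 2) * volume (ball (0 : ℝ²) 1) / 2) := by
      rw [← mul_div_assoc, ← mul_div_assoc, ← mul_assoc, ← mul_assoc,
        ← ENNReal.ofReal_mul (by positivity), ← ENNReal.ofReal_mul (by positivity),
        rpow_div_two_mul_rpow_mul_sq hr]
    _ ≤ c * volume S := by
      gcongr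
      exact ENNReal.div_le_of_le_mul' hS_vol
    _ = ∫⁻ _ in S, c := (setLIntegral_const S c).symm
    _ ≤ ∫⁻ y in S, gagliardoKernel q (radialStretch α) x y :=
      setLIntegral_mono' hS fun y hy ↦
        le_gagliardoKernel_radialStretch hq hx (mem_closedBall_zero_iff.1 hy.1) hy.2
    _ ≤ _ := lintegral_mono_set hS_sub

theorem stmt_6_general (q α : ℝ) (hq : 1 < q) (h : α < 1 - 3 / q) :
    (∫⁻ x in Metric.ball (0 : EuclideanSpace ℝ (Fin 2)) 1,
      ∫⁻ y in Metric.ball (0 : EuclideanSpace ℝ (Fin 2)) 1,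
        ENNReal.ofReal
          (‖radialStretch α x - radialStretch α y‖ ^ q / ‖x - y‖ ^ (q + 1))) = ⊤ := by
  have hq0 : 0 < q := zero_lt_one.trans hq
  have hp : α * q + 1 - q ≤ -2 := by
    have h3 : 3 / q < 1 - α := by linarith
    rw [div_lt_iff₀ hq0] at h3
    linarith
  set K := ENNReal.ofReal (2 ^ (-(q + 1))) * volume (ball (0 : ℝ²) 1) / 2
  have hK : K ≠ 0 := by
    simp [K, ENNReal.div_eq_zero_iff, Real.rpow_pos_of_pos two_pos, Real.pi_pos]
  refine eq_top_iff.2 ?_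
  calc
    ⊤ = (∫⁻ x in ball (0 : ℝ²) 1, ENNReal.ofReal (‖x‖ ^ (α * q + 1 - q))) * K := by
      rw [lintegral_ball_norm_rpow_eq_top volume one_pos (by simpa using hp), ENNReal.top_mul hK]
    _ = ∫⁻ x in ball (0 : ℝ²) 1, ENNReal.ofReal (‖x‖ ^ (α * q + 1 - q)) * K :=
      (lintegral_mul_const _ (measurable_norm.pow_const _).ennreal_ofReal).symm
    _ ≤ _ := setLIntegral_mono' measurableSet_ball fun x hx ↦ by
      rcases eq_or_ne x 0 with rfl | hx0
      · simp [Real.zero_rpow (by linarith : α * q + 1 - q ≠ 0)]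
      · exact le_lintegral_gagliardoKernel_radialStretch hq0.le hx0 (mem_ball_zero_iff.1 hx)

/-- For `α > 0`, `q ∈ (1,∞)` with `α < 1 − 3/q`, the radial stretch does not belong to the
fractional Sobolev space `W^{1−1/q,q}(𝔻, ℝ²)`: its Gagliardo seminorm diverges. -/
theorem stmt_6 (q α : ℝ) (hq : 1 < q) (hα : 0 < α) (h : α < 1 - 3 / q) :
    (∫⁻ x in Metric.ball (0 : EuclideanSpace ℝ (Fin 2)) 1,
      ∫⁻ y in Metric.ball (0 : EuclideanSpace ℝ (Fin 2)) 1,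
        ENNReal.ofReal
          (‖radialStretch α x - radialStretch α y‖ ^ q / ‖x - y‖ ^ (q + 1))) = ⊤ :=
  stmt_6_general q α hq h
end

section
/- Let g(x) = x + C(x) where C is a 1/k-Cantor function (k ≥ 2) which is Hölder continuous with exponent α, and define φ(x,y) = (g(x), y) on [0,1]². If q(1 − α) < 1, then ∑_{k'=0}^∞ ∑_j 2^{-(3−q)k'} H¹(φ(∂Q̃_{k',j}))^q < ∞, where Q̃_{k',j} are the dyadic squares of [0,1]² of generation k'. Moreover φ is a homeomorphism of [0,1]² onto its image which does not belong to W^{1,1}_{loc}([0,1]², ℝ²). -/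
open MeasureTheory
open scoped NNReal ENNReal

noncomputable section

/-- The closed dyadic square of generation `k` with lower-left lattice corner `(i/2^k, j/2^k)`
inside `[0,1]²`. -/
def dyadicSq (k : ℕ) (i j : ℕ) : Set (ℝ × ℝ) :=
  Set.Icc ((i : ℝ) / 2 ^ k) (((i : ℝ) + 1) / 2 ^ k) ×ˢ
    Set.Icc ((j : ℝ) / 2 ^ k) (((j : ℝ) + 1) / 2 ^ k)

/-- Absolute continuity of a real function on `[a,b]` (via finitely many nonoverlapping
subintervals). -/
def AbsContOn (f : ℝ → ℝ) (a b : ℝ) : Prop :=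
  ∀ ε > (0 : ℝ), ∃ δ > (0 : ℝ), ∀ (n : ℕ) (u v : ℕ → ℝ),
    (∀ i < n, a ≤ u i ∧ u i ≤ v i ∧ v i ≤ b) →
    (∀ i, i + 1 < n → v i ≤ u (i + 1)) →
    (∑ i ∈ Finset.range n, (v i - u i)) < δ →
    (∑ i ∈ Finset.range n, |f (v i) - f (u i)|) < ε

/-! Along horizontal lines `φ` acts by the increasing map `g = id + C`, so the image of the
boundary of a dyadic square `[a, b] × [c, d]` of side `2^{-K}` consists of two horizontal segments
of length `g b - g a ≤ 2^{-K} + M 2^{-αK}` and two vertical segments of length `2^{-K}`. Summing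
over the `4^K` squares of generation `K`, the `K`-th term is `O(2^{(q - 1 - αq) K})`, a convergent
geometric series because `q (1 - α) < 1`.

The self-similarity of `C` produces, for every `n`, `2^n` nonoverlapping intervals of total
length `(1 - 1/k)^n` over which `C` increases by `1` in total; hence `g` is not absolutely
continuous. -/

open Set

lemma hausdorffMeasure_Icc_prod_singleton_le (a b c : ℝ) :
    μH[1] (Icc a b ×ˢ {c} : Set (ℝ × ℝ)) ≤ ENNReal.ofReal (b - a) := by
  rw [prod_singleton]
  calc μH[1] ((fun t : ℝ => (t, c)) '' Icc a b) ≤ 1 ^ (1 : ℝ) * μH[1] (Icc a b) :=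
        (LipschitzWith.prodMk_right c).hausdorffMeasure_image_le zero_le_one _
    _ = ENNReal.ofReal (b - a) := by simp [hausdorffMeasure_real, Real.volume_Icc]

lemma hausdorffMeasure_singleton_prod_Icc_le (a c d : ℝ) :
    μH[1] ({a} ×ˢ Icc c d : Set (ℝ × ℝ)) ≤ ENNReal.ofReal (d - c) := by
  rw [singleton_prod]
  calc μH[1] (Prod.mk a '' Icc c d) ≤ 1 ^ (1 : ℝ) * μH[1] (Icc c d) :=
        (LipschitzWith.prodMk_left a).hausdorffMeasure_image_le zero_le_one _
    _ = ENNReal.ofReal (d - c) := by simp [hausdorffMeasure_real, Real.volume_Icc]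

lemma hausdorffMeasure_image_frontier_Icc_prod_le {g : ℝ → ℝ} {a b c d : ℝ}
    (hg : MonotoneOn g (Icc a b)) (hab : a ≤ b) (hcd : c ≤ d) :
    μH[1] ((fun p : ℝ × ℝ => (g p.1, p.2)) '' frontier (Icc a b ×ˢ Icc c d)) ≤
      ENNReal.ofReal (2 * (g b - g a) + 2 * (d - c)) := by
  have hgx : ∀ x ∈ Icc a b, g x ∈ Icc (g a) (g b) := fun x hx =>
    ⟨hg (left_mem_Icc.2 hab) hx hx.1, hg hx (right_mem_Icc.2 hab) hx.2⟩
  have hgab : g a ≤ g b := (hgx a (left_mem_Icc.2 hab)).2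
  have hsub : (fun p : ℝ × ℝ => (g p.1, p.2)) '' frontier (Icc a b ×ˢ Icc c d) ⊆
      (Icc (g a) (g b) ×ˢ {c} ∪ Icc (g a) (g b) ×ˢ {d}) ∪
        ({g a} ×ˢ Icc c d ∪ {g b} ×ˢ Icc c d) := by
    rw [frontier_prod_eq, closure_Icc, closure_Icc, frontier_Icc hab, frontier_Icc hcd]
    rintro _ ⟨⟨x, y⟩, ⟨hx, rfl | rfl⟩ | ⟨rfl | rfl, hy⟩, rfl⟩
    · exact Or.inl (Or.inl ⟨hgx x hx, rfl⟩)
    · exact Or.inl (Or.inr ⟨hgx x hx, rfl⟩)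
    · exact Or.inr (Or.inl ⟨rfl, hy⟩)
    · exact Or.inr (Or.inr ⟨rfl, hy⟩)
  rw [ENNReal.ofReal_add (by linarith) (by linarith), two_mul, two_mul,
    ENNReal.ofReal_add (by linarith) (by linarith),
    ENNReal.ofReal_add (by linarith) (by linarith)]
  refine (measure_mono hsub).trans <| (measure_union_le _ _).trans <| add_le_add
    ((measure_union_le _ _).trans (add_le_add ?_ ?_))
    ((measure_union_le _ _).trans (add_le_add ?_ ?_))
  · exact hausdorffMeasure_Icc_prod_singleton_le _ _ _
  · exact hausdorffMeasure_Icc_prod_singleton_le _ _ _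
  · exact hausdorffMeasure_singleton_prod_Icc_le _ _ _
  · exact hausdorffMeasure_singleton_prod_Icc_le _ _ _

lemma hausdorffMeasure_image_frontier_dyadicSq_le {C : ℝ → ℝ} {M r : ℝ≥0}
    (hCm : MonotoneOn C (Icc 0 1)) (hC : HolderOnWith M r C (Icc 0 1)) (hr : (r : ℝ) ≤ 1)
    (K : ℕ) (i j : Fin (2 ^ K)) :
    μH[1] ((fun p : ℝ × ℝ => (p.1 + C p.1, p.2)) '' frontier (dyadicSq K i j)) ≤
      ENNReal.ofReal ((4 + 2 * M) * (2 : ℝ) ^ (-((r : ℝ) * K))) := by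
  set L : ℝ := (2 : ℝ) ^ (-(K : ℝ)) with hL
  have hL' : L = 1 / 2 ^ K := by rw [hL, Real.rpow_neg zero_le_two, Real.rpow_natCast, one_div]
  have hL0 : 0 < L := by positivity
  have hLr : L ≤ L ^ (r : ℝ) := by
    simpa using Real.rpow_le_rpow_of_exponent_ge hL0
      (Real.rpow_le_one_of_one_le_of_nonpos one_le_two (by simp)) hr
  set a : ℝ := (i : ℝ) / 2 ^ K
  have hsq : Icc a (a + L) ⊆ Icc 0 1 := by
    have hi : (i : ℝ) + 1 ≤ 2 ^ K := by exact_mod_cast i.isLt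
    refine Icc_subset_Icc (by positivity) ?_
    rwa [hL', ← add_div, div_le_one (by positivity)]
  have hgm : MonotoneOn (fun x => x + C x) (Icc a (a + L)) := fun x hx y hy hxy =>
    add_le_add hxy (hCm (hsq hx) (hsq hy) hxy)
  have hCa : C (a + L) - C a ≤ M * L ^ (r : ℝ) := by
    have h := hC.dist_le (hsq (right_mem_Icc.2 (by linarith)))
      (hsq (left_mem_Icc.2 (by linarith)))
    rw [Real.dist_eq, Real.dist_eq, add_sub_cancel_left, abs_of_pos hL0] at h
    exact (le_abs_self _).trans h
  set c : ℝ := (j : ℝ) / 2 ^ K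
  have hdyadic : dyadicSq K i j = Icc a (a + L) ×ˢ Icc c (c + L) := by
    simp only [dyadicSq, hL', a, c, ← add_div]
  calc _ ≤ ENNReal.ofReal (2 * ((a + L + C (a + L)) - (a + C a)) + 2 * ((c + L) - c)) := by
        rw [hdyadic]
        exact hausdorffMeasure_image_frontier_Icc_prod_le hgm (by linarith) (by linarith)
    _ ≤ ENNReal.ofReal ((4 + 2 * M) * L ^ (r : ℝ)) := ENNReal.ofReal_le_ofReal (by nlinarith)
    _ = ENNReal.ofReal ((4 + 2 * M) * (2 : ℝ) ^ (-((r : ℝ) * K))) := by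
        rw [hL, ← Real.rpow_mul zero_le_two, neg_mul, mul_comm (K : ℝ), mul_comm (4 + _)]

lemma two_pow_mul_two_pow_mul_rpow_eq {c α q : ℝ} (hc : 0 ≤ c) (K : ℕ) :
    (2 : ℝ) ^ K * ((2 : ℝ) ^ K * ((2 : ℝ) ^ (-(3 - q) * K) * (c * (2 : ℝ) ^ (-(α * K))) ^ q)) =
      c ^ q * ((2 : ℝ) ^ (q - 1 - α * q)) ^ K := by
  rw [Real.mul_rpow hc (by positivity), ← Real.rpow_mul zero_le_two, ← Real.rpow_natCast,
    ← Real.rpow_natCast _ K, ← Real.rpow_mul zero_le_two,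
    show (q - 1 - α * q) * K = K + (K + (-(3 - q) * K + -(α * K) * q)) by ring,
    Real.rpow_add two_pos, Real.rpow_add two_pos, Real.rpow_add two_pos]
  ring

lemma tsum_dyadic_weighted_rpow_lt_top (f : (K : ℕ) → Fin (2 ^ K) → Fin (2 ^ K) → ℝ≥0∞)
    {c α q : ℝ} (hc : 0 ≤ c) (hq : 0 < q) (hqα : q * (1 - α) < 1)
    (hf : ∀ K i j, f K i j ≤ ENNReal.ofReal (c * (2 : ℝ) ^ (-(α * K)))) :
    ∑' K : ℕ, ∑' i : Fin (2 ^ K), ∑' j : Fin (2 ^ K),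
      ENNReal.ofReal ((2 : ℝ) ^ (-(3 - q) * (K : ℝ))) * f K i j ^ q < ⊤ := by
  set ρ : ℝ := (2 : ℝ) ^ (q - 1 - α * q)
  have hρ : ENNReal.ofReal ρ < 1 :=
    ENNReal.ofReal_lt_one.2 (Real.rpow_lt_one_of_one_lt_of_neg one_lt_two (by linarith))
  have hK : ∀ K : ℕ, ∑' i : Fin (2 ^ K), ∑' j : Fin (2 ^ K),
      ENNReal.ofReal ((2 : ℝ) ^ (-(3 - q) * (K : ℝ))) * f K i j ^ q ≤
        ENNReal.ofReal (c ^ q) * ENNReal.ofReal ρ ^ K := by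
    intro K
    calc _ ≤ ∑' i : Fin (2 ^ K), ∑' j : Fin (2 ^ K),
          ENNReal.ofReal ((2 : ℝ) ^ (-(3 - q) * (K : ℝ)) * (c * (2 : ℝ) ^ (-(α * K))) ^ q) := by
          refine ENNReal.tsum_le_tsum fun i => ENNReal.tsum_le_tsum fun j => ?_
          rw [ENNReal.ofReal_mul (by positivity),
            ← ENNReal.ofReal_rpow_of_nonneg (by positivity) hq.le]
          gcongr
          exact hf K i j
      _ = 2 ^ K * (2 ^ K * ENNReal.ofReal
            ((2 : ℝ) ^ (-(3 - q) * (K : ℝ)) * (c * (2 : ℝ) ^ (-(α * K))) ^ q)) := by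
          simp only [tsum_fintype, Finset.sum_const, Finset.card_univ, Fintype.card_fin,
            nsmul_eq_mul]
          push_cast
          rfl
      _ = ENNReal.ofReal (c ^ q) * ENNReal.ofReal ρ ^ K := by
          have h2 : (2 : ℝ≥0∞) ^ K = ENNReal.ofReal (2 ^ K) := by
            rw [ENNReal.ofReal_pow zero_le_two, ENNReal.ofReal_ofNat]
          have h2K : (0 : ℝ) ≤ 2 ^ K := by positivity
          rw [← ENNReal.ofReal_pow (by positivity), ← ENNReal.ofReal_mul (by positivity),
            ← two_pow_mul_two_pow_mul_rpow_eq hc, h2, ENNReal.ofReal_mul h2K,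
            ENNReal.ofReal_mul h2K]
  calc _ ≤ ∑' K : ℕ, ENNReal.ofReal (c ^ q) * ENNReal.ofReal ρ ^ K := ENNReal.tsum_le_tsum hK
    _ = ENNReal.ofReal (c ^ q) * (1 - ENNReal.ofReal ρ)⁻¹ := by
        rw [ENNReal.tsum_mul_left, ENNReal.tsum_geometric]
    _ < ⊤ := ENNReal.mul_lt_top ENNReal.ofReal_lt_top (ENNReal.inv_lt_top.2 (tsub_pos_of_lt hρ))

def OrderedSubintervals (a b : ℝ) (n : ℕ) (u v : ℕ → ℝ) : Prop :=
  (∀ i < n, a ≤ u i ∧ u i ≤ v i ∧ v i ≤ b) ∧ ∀ i, i + 1 < n → v i ≤ u (i + 1)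

def seqAppend (n : ℕ) (u w : ℕ → ℝ) : ℕ → ℝ := fun i => if i < n then u i else w (i - n)

lemma sum_range_seqAppend (φ : ℝ → ℝ → ℝ) (n m : ℕ) (u v u' v' : ℕ → ℝ) :
    ∑ i ∈ Finset.range (n + m), φ (seqAppend n u u' i) (seqAppend n v v' i) =
      ∑ i ∈ Finset.range n, φ (u i) (v i) + ∑ i ∈ Finset.range m, φ (u' i) (v' i) := by
  rw [Finset.sum_range_add]
  congr 1
  · exact Finset.sum_congr rfl fun i hi => by simp [seqAppend, Finset.mem_range.1 hi]
  · simp [seqAppend]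

namespace OrderedSubintervals

variable {a b c : ℝ} {n m : ℕ} {u v u' v' : ℕ → ℝ}

lemma mono (h : OrderedSubintervals a b n u v) {a' b' : ℝ} (ha : a' ≤ a) (hb : b ≤ b') :
    OrderedSubintervals a' b' n u v :=
  ⟨fun i hi => let ⟨h₁, h₂, h₃⟩ := h.1 i hi; ⟨ha.trans h₁, h₂, h₃.trans hb⟩, h.2⟩

lemma map {f : ℝ → ℝ} (h : OrderedSubintervals a b n u v) (hf : Monotone f) :
    OrderedSubintervals (f a) (f b) n (f ∘ u) (f ∘ v) :=
  ⟨fun i hi => let ⟨h₁, h₂, h₃⟩ := h.1 i hi; ⟨hf h₁, hf h₂, hf h₃⟩, fun i hi => hf (h.2 i hi)⟩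

lemma append (h : OrderedSubintervals a b n u v) (h' : OrderedSubintervals b c m u' v')
    (hab : a ≤ b) (hbc : b ≤ c) :
    OrderedSubintervals a c (n + m) (seqAppend n u u') (seqAppend n v v') := by
  refine ⟨fun i hi => ?_, fun i hi => ?_⟩
  · by_cases hin : i < n
    · simpa [seqAppend, hin] using (h.mono le_rfl hbc).1 i hin
    · simpa [seqAppend, hin] using (h'.mono hab le_rfl).1 (i - n) (by omega)
  · rcases lt_trichotomy (i + 1) n with hin | hin | hin
    · simpa [seqAppend, hin, (by omega : i < n)] using h.2 i hin
    · have hv := (h.1 i (by omega)).2.2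
      have hu := (h'.1 0 (by omega)).1
      simp only [seqAppend, hin, (by omega : i < n), lt_irrefl, if_true, if_false, Nat.sub_self]
      linarith
    · have hi₁ : ¬ i < n := by omega
      have hi₂ : ¬ i + 1 < n := by omega
      have hsub : i + 1 - n = i - n + 1 := by omega
      simpa [seqAppend, hi₁, hi₂, hsub] using h'.2 (i - n) (by omega)

end OrderedSubintervals

section SelfSimilar

variable {C : ℝ → ℝ} {l : ℝ}

lemma exists_orderedSubintervals_of_selfSimilar (hl0 : 0 ≤ l) (hl : l ≤ 1 / 2)
    (hC0 : C 0 = 0) (hC1 : C 1 = 1)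
    (hleft : ∀ x ∈ Icc (0 : ℝ) 1, C (l * x) = C x / 2)
    (hright : ∀ x ∈ Icc (0 : ℝ) 1, C (1 - l + l * x) = 1 / 2 + C x / 2) (n : ℕ) :
    ∃ u v : ℕ → ℝ, OrderedSubintervals 0 1 (2 ^ n) u v ∧
      ∑ i ∈ Finset.range (2 ^ n), (v i - u i) = (2 * l) ^ n ∧
      ∑ i ∈ Finset.range (2 ^ n), (C (v i) - C (u i)) = 1 := by
  induction n with
  | zero =>
    refine ⟨fun _ => 0, fun _ => 1, ⟨fun i _ => by norm_num, fun i hi => by omega⟩, ?_, ?_⟩ <;>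
      simp [hC0, hC1]
  | succ n ih =>
    obtain ⟨u, v, huv, hlen, hinc⟩ := ih
    have hmem : ∀ i ∈ Finset.range (2 ^ n), u i ∈ Icc (0 : ℝ) 1 ∧ v i ∈ Icc (0 : ℝ) 1 :=
      fun i hi => let ⟨h₁, h₂, h₃⟩ := huv.1 i (Finset.mem_range.1 hi)
        ⟨⟨h₁, h₂.trans h₃⟩, ⟨h₁.trans h₂, h₃⟩⟩
    have hscale : Monotone (l * ·) := fun x y hxy => mul_le_mul_of_nonneg_left hxy hl0
    have hshift : Monotone (1 - l + l * ·) := hscale.const_add _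
    refine ⟨seqAppend (2 ^ n) ((l * ·) ∘ u) ((1 - l + l * ·) ∘ u),
      seqAppend (2 ^ n) ((l * ·) ∘ v) ((1 - l + l * ·) ∘ v), ?_, ?_, ?_⟩
    · rw [pow_succ, mul_two]
      have hL : OrderedSubintervals 0 (1 - l) (2 ^ n) ((l * ·) ∘ u) ((l * ·) ∘ v) :=
        (huv.map hscale).mono (by simp) (by simp only [mul_one]; linarith)
      have hR : OrderedSubintervals (1 - l) 1 (2 ^ n) ((1 - l + l * ·) ∘ u) ((1 - l + l * ·) ∘ v) :=
        (huv.map hshift).mono (by simp) (by simp)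
      exact hL.append hR (by linarith) (by linarith)
    · rw [pow_succ, mul_two, sum_range_seqAppend (fun x y => y - x)]
      simp only [Function.comp_apply, add_sub_add_left_eq_sub, ← mul_sub, ← Finset.mul_sum, hlen]
      ring
    · rw [pow_succ, mul_two, sum_range_seqAppend (fun x y => C y - C x)]
      have hterm : ∀ i ∈ Finset.range (2 ^ n),
          C (l * v i) - C (l * u i) = (C (v i) - C (u i)) / 2 ∧
            C (1 - l + l * v i) - C (1 - l + l * u i) = (C (v i) - C (u i)) / 2 := fun i hi => by
        rw [hleft _ (hmem i hi).1, hleft _ (hmem i hi).2, hright _ (hmem i hi).1,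
          hright _ (hmem i hi).2]
        constructor <;> ring
      simp only [Function.comp_apply]
      rw [Finset.sum_congr rfl fun i hi => (hterm i hi).1,
        Finset.sum_congr rfl fun i hi => (hterm i hi).2, ← Finset.sum_div, hinc]
      norm_num

lemma not_absContOn_id_add_of_selfSimilar (hl0 : 0 < l) (hl : l < 1 / 2)
    (hC0 : C 0 = 0) (hC1 : C 1 = 1)
    (hself1 : ∀ x ∈ Icc (0 : ℝ) l, C x = 1 / 2 * C (x / l))
    (hself3 : ∀ x ∈ Icc (1 - l) 1, C x = 1 / 2 + 1 / 2 * C ((x - (1 - l)) / l)) :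
    ¬ AbsContOn (fun x => x + C x) 0 1 := by
  have hleft : ∀ x ∈ Icc (0 : ℝ) 1, C (l * x) = C x / 2 := fun x hx => by
    rw [hself1 _ ⟨by nlinarith [hx.1], by nlinarith [hx.2]⟩, mul_div_cancel_left₀ _ hl0.ne']
    ring
  have hright : ∀ x ∈ Icc (0 : ℝ) 1, C (1 - l + l * x) = 1 / 2 + C x / 2 := fun x hx => by
    rw [hself3 _ ⟨by nlinarith [hx.1], by nlinarith [hx.2]⟩, add_sub_cancel_left,
      mul_div_cancel_left₀ _ hl0.ne']
    ring
  intro hac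
  obtain ⟨δ, hδ, hac⟩ := hac 1 one_pos
  obtain ⟨n, hn⟩ := exists_pow_lt_of_lt_one hδ (by linarith : 2 * l < 1)
  obtain ⟨u, v, huv, hlen, hinc⟩ :=
    exists_orderedSubintervals_of_selfSimilar hl0.le hl.le hC0 hC1 hleft hright n
  refine (hac (2 ^ n) u v huv.1 huv.2 (hlen ▸ hn)).not_ge (hinc ▸ Finset.sum_le_sum fun i hi => ?_)
  have huv_i := (huv.1 i (Finset.mem_range.1 hi)).2.1
  exact (by linarith : C (v i) - C (u i) ≤ _).trans (le_abs_self _)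

end SelfSimilar

lemma log_half_div_log_half_mul_mem_Ioc {t : ℝ} (h0 : 0 < t) (h1 : t ≤ 1) :
    Real.log (1 / 2) / Real.log (1 / 2 * t) ∈ Ioc 0 1 := by
  have hlog2 : Real.log (1 / 2) < 0 := Real.log_neg (by norm_num) (by norm_num)
  have hlogt : Real.log (1 / 2 * t) < 0 := Real.log_neg (by positivity) (by linarith)
  have hle : Real.log (1 / 2 * t) ≤ Real.log (1 / 2) :=
    Real.log_le_log (by positivity) (by linarith)
  exact ⟨div_pos_of_neg_of_neg hlog2 hlogt, (div_le_one_of_neg hlogt).2 hle⟩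

theorem stmt_10_general (k : ℕ) (hk : 2 ≤ k) (q : ℝ) (hq : 0 < q) (C : ℝ → ℝ) (M : ℝ≥0)
    (hCc : ContinuousOn C (Set.Icc 0 1)) (hCm : MonotoneOn C (Set.Icc 0 1))
    (hC0 : C 0 = 0) (hC1 : C 1 = 1)
    (hself1 : ∀ x ∈ Set.Icc (0 : ℝ) ((1 - 1 / (k : ℝ)) / 2),
      C x = (1 / 2) * C (x / ((1 - 1 / (k : ℝ)) / 2)))
    (hself3 : ∀ x ∈ Set.Icc (1 - (1 - 1 / (k : ℝ)) / 2) (1 : ℝ),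
      C x = 1 / 2 + (1 / 2) * C ((x - (1 - (1 - 1 / (k : ℝ)) / 2)) / ((1 - 1 / (k : ℝ)) / 2)))
    (hHolder : HolderOnWith M
      (Real.toNNReal (Real.log (1 / 2) / Real.log ((1 / 2) * (1 - 1 / (k : ℝ)))))
      C (Set.Icc 0 1))
    (hqα : q * (1 - Real.log (1 / 2) / Real.log ((1 / 2) * (1 - 1 / (k : ℝ)))) < 1) :
    (∑' k' : ℕ, ∑' i : Fin (2 ^ k'), ∑' j : Fin (2 ^ k'),
        ENNReal.ofReal ((2 : ℝ) ^ (-(3 - q) * (k' : ℝ))) *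
          (μH[1] ((fun p : ℝ × ℝ => (p.1 + C p.1, p.2)) '' frontier (dyadicSq k' i j))) ^ q)
        < ⊤ ∧
    ContinuousOn (fun p : ℝ × ℝ => (p.1 + C p.1, p.2)) (Set.Icc (0:ℝ) 1 ×ˢ Set.Icc (0:ℝ) 1) ∧
    Set.InjOn (fun p : ℝ × ℝ => (p.1 + C p.1, p.2)) (Set.Icc (0:ℝ) 1 ×ˢ Set.Icc (0:ℝ) 1) ∧
    ¬ AbsContOn (fun x => x + C x) 0 1 := by
  have hk' : 1 / (k : ℝ) ≤ 1 / 2 := one_div_le_one_div_of_le two_pos (by exact_mod_cast hk)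
  have hk0 : 0 < 1 / (k : ℝ) := one_div_pos.2 (by positivity)
  obtain ⟨hα0, hα1⟩ :=
    log_half_div_log_half_mul_mem_Ioc (t := 1 - 1 / k) (by linarith) (by linarith)
  have hα := Real.coe_toNNReal _ hα0.le
  have hg : StrictMonoOn (fun x => x + C x) (Icc 0 1) := fun x hx y hy hxy =>
    add_lt_add_of_lt_of_le hxy (hCm hx hy hxy.le)
  refine ⟨?_, ?_, ?_, ?_⟩
  · refine tsum_dyadic_weighted_rpow_lt_top _ (by positivity : (0 : ℝ) ≤ 4 + 2 * M) hq hqα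
      fun K i j => ?_
    simpa only [hα] using
      hausdorffMeasure_image_frontier_dyadicSq_le hCm hHolder (hα.le.trans hα1) K i j
  · exact (continuousOn_fst.add (hCc.comp continuousOn_fst fun p hp => hp.1)).prodMk
      continuousOn_snd
  · intro p hp p' hp' h
    obtain ⟨h₁, h₂⟩ := Prod.mk.inj h
    exact Prod.ext (hg.injOn hp.1 hp'.1 h₁) h₂
  · exact not_absContOn_id_add_of_selfSimilar (by linarith) (by linarith) hC0 hC1 hself1 hself3

/-- Let `C` be a `1/k`-Cantor function (`k ≥ 2`), `α`-Hölder with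
`α = log(1/2)/log((1/2)(1−1/k))`, let `g(x) = x + C(x)` and `φ(x,y) = (g(x), y)`. If
`q(1−α) < 1` then `∑_{k'} ∑_j 2^{−(3−q)k'} H¹(φ(∂Q̃_{k',j}))^q < ∞`; moreover `φ` is a
homeomorphism of `[0,1]²` onto its image which does not belong to `W^{1,1}_loc` (it fails the
ACL condition: `g` is not absolutely continuous). -/
theorem stmt_10 (k : ℕ) (hk : 2 ≤ k) (q : ℝ) (hq : 0 < q) (C : ℝ → ℝ) (M : ℝ≥0)
    (hCc : ContinuousOn C (Set.Icc 0 1)) (hCm : MonotoneOn C (Set.Icc 0 1))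
    (hC0 : C 0 = 0) (hC1 : C 1 = 1)
    (hself1 : ∀ x ∈ Set.Icc (0 : ℝ) ((1 - 1 / (k : ℝ)) / 2),
      C x = (1 / 2) * C (x / ((1 - 1 / (k : ℝ)) / 2)))
    (hself2 : ∀ x ∈ Set.Icc ((1 - 1 / (k : ℝ)) / 2) (1 - (1 - 1 / (k : ℝ)) / 2), C x = 1 / 2)
    (hself3 : ∀ x ∈ Set.Icc (1 - (1 - 1 / (k : ℝ)) / 2) (1 : ℝ),
      C x = 1 / 2 + (1 / 2) * C ((x - (1 - (1 - 1 / (k : ℝ)) / 2)) / ((1 - 1 / (k : ℝ)) / 2)))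
    (hHolder : HolderOnWith M
      (Real.toNNReal (Real.log (1 / 2) / Real.log ((1 / 2) * (1 - 1 / (k : ℝ)))))
      C (Set.Icc 0 1))
    (hqα : q * (1 - Real.log (1 / 2) / Real.log ((1 / 2) * (1 - 1 / (k : ℝ)))) < 1) :
    (∑' k' : ℕ, ∑' i : Fin (2 ^ k'), ∑' j : Fin (2 ^ k'),
        ENNReal.ofReal ((2 : ℝ) ^ (-(3 - q) * (k' : ℝ))) *
          (μH[1] ((fun p : ℝ × ℝ => (p.1 + C p.1, p.2)) '' frontier (dyadicSq k' i j))) ^ q)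
        < ⊤ ∧
    ContinuousOn (fun p : ℝ × ℝ => (p.1 + C p.1, p.2)) (Set.Icc (0:ℝ) 1 ×ˢ Set.Icc (0:ℝ) 1) ∧
    Set.InjOn (fun p : ℝ × ℝ => (p.1 + C p.1, p.2)) (Set.Icc (0:ℝ) 1 ×ˢ Set.Icc (0:ℝ) 1) ∧
    ¬ AbsContOn (fun x => x + C x) 0 1 :=
  stmt_10_general k hk q hq C M hCc hCm hC0 hC1 hself1 hself3 hHolder hqα
end
end

section
/- Let Q and Q̂ be two quadrilaterals in ℝ² whose vertices are obtained from the vertices of a dyadic square of side 2^{-k} and from the vertices of its four dyadic children respectively, each vertex v shifted diagonally so that both coordinates of v − ṽ lie in the interval [2^{-k}/10 − 2^{-k}/40, 2^{-k}/10] (for generation k) and in [2^{-(k+1)}/10 − 2^{-(k+1)}/40, 2^{-(k+1)}/10] (for generation k+1). Then each side of ∂Q has distance at least 2^{-k}/40 from the corresponding side of ∂Q̂, and the boundaries ∂Q and ∂Q̂ intersect in exactly two points. -/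
/-!
Write `δ = 2^{-k}`. Every vertex of `Q` is shifted by at least `δ/10 − δ/40` in each coordinate,
every vertex of `Q̂` by at most `δ/20`, so the bounding box of a side of `∂Q` is `δ/40` away from
the bounding boxes of the two sides of `∂Q̂` along the same side of the square. The same box
comparison separates all other pairs of sides, except two: the bottom side of `∂Q` overshoots the
right edge of the square and meets the lower right side of `∂Q̂`, and the left side of `∂Q` meets
the upper left side of `∂Q̂`. Each of these pairs is a "plus sign": the endpoints of either
segment lie strictly inside the strip swept out by the other, and two such segments cross in exactly
one point.
-/

open Set
open Fin.NatCast

noncomputable section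

namespace DyadicGrid

def cross (a b : ℝ × ℝ) : ℝ := a.1 * b.2 - a.2 * b.1

lemma cross_smul_left (c : ℝ) (a b : ℝ × ℝ) : cross (c • a) b = c * cross a b := by
  simp only [cross, Prod.smul_fst, Prod.smul_snd, smul_eq_mul]; ring

lemma cross_self (a : ℝ × ℝ) : cross a a = 0 := by
  simp only [cross]; ring

lemma eq_zero_of_cross_eq_zero {a b x : ℝ × ℝ} (hab : cross a b ≠ 0) (ha : cross x a = 0)
    (hb : cross x b = 0) : x = 0 := by
  unfold cross at *
  ext
  · exact (mul_eq_zero.1 (by linear_combination a.1 * hb - b.1 * ha :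
      x.1 * (a.1 * b.2 - a.2 * b.1) = 0)).resolve_right hab
  · exact (mul_eq_zero.1 (by linear_combination a.2 * hb - b.2 * ha :
      x.2 * (a.1 * b.2 - a.2 * b.1) = 0)).resolve_right hab

lemma segment_inter_subsingleton {p q r s : ℝ × ℝ} (h : cross (q - p) (s - r) ≠ 0) :
    (segment ℝ p q ∩ segment ℝ r s).Subsingleton := by
  rintro x ⟨hxpq, hxrs⟩ y ⟨hypq, hyrs⟩
  rw [segment_eq_image'] at hxpq hxrs hypq hyrs
  obtain ⟨t, -, rfl⟩ := hxpq
  obtain ⟨t', -, rfl⟩ := hypq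
  obtain ⟨u, -, hu⟩ := hxrs
  obtain ⟨u', -, hu'⟩ := hyrs
  beta_reduce at hu hu'
  have hpq : p + t • (q - p) - (p + t' • (q - p)) = (t - t') • (q - p) := by
    rw [sub_smul]; abel
  have hrs : p + t • (q - p) - (p + t' • (q - p)) = (u - u') • (s - r) := by
    rw [← hu, ← hu', sub_smul]; abel
  refine sub_eq_zero.1 (eq_zero_of_cross_eq_zero h ?_ ?_)
  · rw [hpq, cross_smul_left, cross_self, mul_zero]
  · rw [hrs, cross_smul_left, cross_self, mul_zero]

lemma segment_inter_nonempty_of_cross {p q r s : ℝ × ℝ} (hp : cross (p - r) (s - r) < 0)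
    (hq : 0 < cross (q - r) (s - r)) (hr : 0 < cross (r - p) (q - p))
    (hs : cross (s - p) (q - p) < 0) : (segment ℝ p q ∩ segment ℝ r s).Nonempty := by
  set C := cross (q - p) (s - r)
  have hCpq : C = cross (q - r) (s - r) - cross (p - r) (s - r) := by
    simp only [C, cross, Prod.fst_sub, Prod.snd_sub]; ring
  have hCrs : C = cross (r - p) (q - p) - cross (s - p) (q - p) := by
    simp only [C, cross, Prod.fst_sub, Prod.snd_sub]; ring
  have hC : 0 < C := by linarith
  -- Cramer's rule for `p + t • (q - p) = r + u • (s - r)`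
  set t := cross (r - p) (s - r) / C
  set u := cross (r - p) (q - p) / C
  have ht : t ∈ Icc (0 : ℝ) 1 := by
    have : cross (r - p) (s - r) = -cross (p - r) (s - r) := by
      simp only [cross, Prod.fst_sub, Prod.snd_sub]; ring
    constructor
    · exact div_nonneg (by linarith) hC.le
    · exact (div_le_one hC).2 (by linarith)
  have hu : u ∈ Icc (0 : ℝ) 1 :=
    ⟨div_nonneg hr.le hC.le, (div_le_one hC).2 (by linarith)⟩
  have hmeet : p + t • (q - p) = r + u • (s - r) := by
    have hC0 : C ≠ 0 := hC.ne'
    ext <;> simp only [t, u, Prod.fst_add, Prod.snd_add, Prod.smul_fst, Prod.smul_snd,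
      Prod.fst_sub, Prod.snd_sub, smul_eq_mul] <;> field_simp <;>
      simp only [C, cross, Prod.fst_sub, Prod.snd_sub] <;> ring
  refine ⟨p + t • (q - p), ?_, ?_⟩
  · rw [segment_eq_image']; exact ⟨t, ht, rfl⟩
  · rw [segment_eq_image', hmeet]; exact ⟨u, hu, rfl⟩

theorem exists_segment_inter_eq_singleton {p q r s : ℝ × ℝ} (hr : r.1 ∈ Ioo p.1 q.1)
    (hs : s.1 ∈ Ioo p.1 q.1) (hp : p.2 ∈ Ioo r.2 s.2) (hq : q.2 ∈ Ioo r.2 s.2) :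
    ∃ x, segment ℝ p q ∩ segment ℝ r s = {x} := by
  obtain ⟨hpr, hrq⟩ := hr
  obtain ⟨hps, hsq⟩ := hs
  obtain ⟨hrp, hps'⟩ := hp
  obtain ⟨hrq', hqs⟩ := hq
  -- e.g. `cross (p - r) (s - r) = (p.1 - r.1) * (s.2 - p.2) + (p.2 - r.2) * (p.1 - s.1)`, and
  -- likewise for the other three: sums of two products of coordinate gaps of known sign
  have hp' : cross (p - r) (s - r) < 0 := by
    simp only [cross, Prod.fst_sub, Prod.snd_sub]
    nlinarith [mul_pos (sub_pos.2 hpr) (sub_pos.2 hps'), mul_pos (sub_pos.2 hrp) (sub_pos.2 hps)]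
  have hq' : 0 < cross (q - r) (s - r) := by
    simp only [cross, Prod.fst_sub, Prod.snd_sub]
    nlinarith [mul_pos (sub_pos.2 hrq) (sub_pos.2 hqs), mul_pos (sub_pos.2 hrq') (sub_pos.2 hsq)]
  have hr' : 0 < cross (r - p) (q - p) := by
    simp only [cross, Prod.fst_sub, Prod.snd_sub]
    nlinarith [mul_pos (sub_pos.2 hpr) (sub_pos.2 hrq'), mul_pos (sub_pos.2 hrp) (sub_pos.2 hrq)]
  have hs' : cross (s - p) (q - p) < 0 := by
    simp only [cross, Prod.fst_sub, Prod.snd_sub]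
    nlinarith [mul_pos (sub_pos.2 hps) (sub_pos.2 hqs), mul_pos (sub_pos.2 hps') (sub_pos.2 hsq)]
  obtain ⟨x, hx⟩ := segment_inter_nonempty_of_cross hp' hq' hr' hs'
  refine ⟨x, (segment_inter_subsingleton ?_).eq_singleton_of_mem hx⟩
  have : cross (q - p) (s - r) = cross (q - r) (s - r) - cross (p - r) (s - r) := by
    simp only [cross, Prod.fst_sub, Prod.snd_sub]; ring
  linarith

lemma segment_add_subset_Icc {𝕜 E : Type*} [Semiring 𝕜] [PartialOrder 𝕜] [AddCommMonoid E]
    [Lattice E] [IsOrderedAddMonoid E] [Module 𝕜 E] [PosSMulMono 𝕜 E] {c d s t a b : E}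
    (hs : s ∈ Icc a b) (ht : t ∈ Icc a b) :
    segment 𝕜 (c + s) (d + t) ⊆ Icc (c ⊓ d + a) (c ⊔ d + b) :=
  (convex_Icc _ _).segment_subset
    ⟨add_le_add inf_le_left hs.1, add_le_add le_sup_left hs.2⟩
    ⟨add_le_add inf_le_right ht.1, add_le_add le_sup_right ht.2⟩

def shiftBox (δ : ℝ) : Set (ℝ × ℝ) := Icc (δ / 10 - δ / 40, δ / 10 - δ / 40) (δ / 10, δ / 10)

def quadVertex (w : ℝ × ℝ) (δ : ℝ) (σ : Fin 4 → ℝ × ℝ) (i : Fin 4) : ℝ × ℝ :=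
  ![w, w + (δ, 0), w + (δ, δ), w + (0, δ)] i + σ i

def childVertex (w : ℝ × ℝ) (δ : ℝ) (τ : Fin 8 → ℝ × ℝ) (j : Fin 8) : ℝ × ℝ :=
  ![w, w + (δ / 2, 0), w + (δ, 0), w + (δ, δ / 2), w + (δ, δ), w + (δ / 2, δ), w + (0, δ),
    w + (0, δ / 2)] j + τ j

variable {w : ℝ × ℝ} {δ : ℝ} {σ : Fin 4 → ℝ × ℝ} {τ : Fin 8 → ℝ × ℝ}
  (hδ : 0 < δ) (hσ : ∀ i, σ i ∈ shiftBox δ) (hτ : ∀ j, τ j ∈ shiftBox (δ / 2))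
include hδ hσ hτ

lemma le_dist_of_mem_sides {i : Fin 4} {j : Fin 8} {x y : ℝ × ℝ}
    (hx : x ∈ segment ℝ (quadVertex w δ σ i) (quadVertex w δ σ (i + 1)))
    (hy : y ∈ segment ℝ (childVertex w δ τ j) (childVertex w δ τ (j + 1)))
    (hij : ¬(i = 0 ∧ j = 2 ∨ i = 3 ∧ j = 5)) : δ / 40 ≤ dist x y := by
  have hE := segment_add_subset_Icc (hσ i) (hσ (i + 1)) hx
  have hF := segment_add_subset_Icc (hτ j) (hτ (j + 1)) hy
  by_contra! h
  rw [Prod.dist_eq, max_lt_iff, Real.dist_eq, Real.dist_eq, abs_lt, abs_lt] at h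
  fin_cases i <;> fin_cases j <;>
    simp only [Fin.isValue, Fin.mk_one, Fin.reduceAdd, Fin.reduceEq, Fin.reduceFinMk, Fin.zero_eta,
      Matrix.cons_val, Matrix.cons_val_one, Matrix.cons_val_zero, Nat.reduceAdd, Nat.succ_eq_add_one,
      Prod.fst_add, Prod.snd_add, Prod.fst_zero, Prod.snd_zero, Prod.le_def, mem_Icc,
      add_le_add_iff_left, le_add_iff_nonneg_right, half_le_self_iff, hδ.le, (half_pos hδ).le,
      inf_of_le_left, inf_of_le_right, sup_of_le_left, sup_of_le_right, le_refl, add_zero, zero_add,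
      and_self, and_true, and_false, or_false, or_self, or_true, not_true, not_false_eq_true]
      at hE hF hij <;> linarith

lemma le_dist_of_mem_corresponding_sides (i : Fin 4) {x y : ℝ × ℝ}
    (hx : x ∈ segment ℝ (quadVertex w δ σ i) (quadVertex w δ σ (i + 1)))
    (hy : y ∈ segment ℝ (childVertex w δ τ ((2 * (i : ℕ) : ℕ) : Fin 8))
        (childVertex w δ τ ((2 * (i : ℕ) : ℕ) + 1 : Fin 8)) ∪
      segment ℝ (childVertex w δ τ ((2 * (i : ℕ) : ℕ) + 1 : Fin 8))
        (childVertex w δ τ ((2 * (i : ℕ) : ℕ) + 2 : Fin 8))) :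
    δ / 40 ≤ dist x y := by
  rcases hy with hy | hy
  · exact le_dist_of_mem_sides hδ hσ hτ hx hy (by fin_cases i <;> decide)
  · rw [show (2 : Fin 8) = 1 + 1 from rfl, ← add_assoc] at hy
    exact le_dist_of_mem_sides hδ hσ hτ hx hy (by fin_cases i <;> decide)

lemma iUnion_segment_inter_iUnion_segment :
    (⋃ i, segment ℝ (quadVertex w δ σ i) (quadVertex w δ σ (i + 1))) ∩
      (⋃ j, segment ℝ (childVertex w δ τ j) (childVertex w δ τ (j + 1))) =
    segment ℝ (quadVertex w δ σ 0) (quadVertex w δ σ 1) ∩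
        segment ℝ (childVertex w δ τ 2) (childVertex w δ τ 3) ∪
      segment ℝ (quadVertex w δ σ 3) (quadVertex w δ σ 0) ∩
        segment ℝ (childVertex w δ τ 5) (childVertex w δ τ 6) := by
  apply Subset.antisymm
  · rintro x ⟨hx, hy⟩
    obtain ⟨i, hi⟩ := mem_iUnion.1 hx
    obtain ⟨j, hj⟩ := mem_iUnion.1 hy
    by_cases hij : i = 0 ∧ j = 2 ∨ i = 3 ∧ j = 5
    · rcases hij with ⟨rfl, rfl⟩ | ⟨rfl, rfl⟩
      exacts [Or.inl ⟨hi, hj⟩, Or.inr ⟨hi, hj⟩]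
    · have := le_dist_of_mem_sides hδ hσ hτ hi hj hij
      rw [dist_self] at this
      linarith
  · rintro x (⟨hi, hj⟩ | ⟨hi, hj⟩)
    exacts [⟨mem_iUnion.2 ⟨0, hi⟩, mem_iUnion.2 ⟨2, hj⟩⟩,
      ⟨mem_iUnion.2 ⟨3, hi⟩, mem_iUnion.2 ⟨5, hj⟩⟩]

lemma exists_bottom_inter_eq_singleton :
    ∃ S, segment ℝ (quadVertex w δ σ 0) (quadVertex w δ σ 1) ∩
      segment ℝ (childVertex w δ τ 2) (childVertex w δ τ 3) = {S} := by
  obtain ⟨⟨a₁, a₂⟩, a₃, a₄⟩ := hσ 0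
  obtain ⟨⟨b₁, b₂⟩, b₃, b₄⟩ := hσ 1
  obtain ⟨⟨c₁, c₂⟩, c₃, c₄⟩ := hτ 2
  obtain ⟨⟨d₁, d₂⟩, d₃, d₄⟩ := hτ 3
  apply exists_segment_inter_eq_singleton <;>
    simp only [quadVertex, childVertex, Matrix.cons_val, Prod.fst_add, Prod.snd_add, mem_Ioo] <;>
    constructor <;> linarith

lemma exists_left_inter_eq_singleton :
    ∃ T, segment ℝ (quadVertex w δ σ 3) (quadVertex w δ σ 0) ∩
      segment ℝ (childVertex w δ τ 5) (childVertex w δ τ 6) = {T} := by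
  obtain ⟨⟨a₁, a₂⟩, a₃, a₄⟩ := hσ 0
  obtain ⟨⟨b₁, b₂⟩, b₃, b₄⟩ := hσ 3
  obtain ⟨⟨c₁, c₂⟩, c₃, c₄⟩ := hτ 5
  obtain ⟨⟨d₁, d₂⟩, d₃, d₄⟩ := hτ 6
  rw [inter_comm, segment_symm ℝ (childVertex w δ τ 5), segment_symm ℝ (quadVertex w δ σ 3)]
  apply exists_segment_inter_eq_singleton <;>
    simp only [quadVertex, childVertex, Matrix.cons_val, Prod.fst_add, Prod.snd_add, mem_Ioo] <;>
    constructor <;> linarith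

end DyadicGrid

open DyadicGrid

/-- The modified grid at consecutive generations: a dyadic square of side `δ = 2^{−k}` with
corner `w` has its four vertices shifted diagonally by amounts in
`[δ/10 − δ/40, δ/10]` per coordinate, giving a quadrilateral `Q`; the eight boundary lattice
points of its four dyadic children are shifted by amounts in
`[δ'/10 − δ'/40, δ'/10]` per coordinate (`δ' = δ/2`), giving the outer boundary polygon `∂Q̂`.
Then each side of `∂Q` has distance at least `δ/40` from the corresponding side of `∂Q̂`, and
`∂Q` and `∂Q̂` intersect in exactly two points. -/
theorem stmt_18 (k : ℕ) (w : ℝ × ℝ) (σ : Fin 4 → ℝ × ℝ) (τ : Fin 8 → ℝ × ℝ)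
    (hσ : ∀ i, (σ i).1 ∈ Icc ((2:ℝ)^(-(k:ℝ))/10 - (2:ℝ)^(-(k:ℝ))/40) ((2:ℝ)^(-(k:ℝ))/10) ∧
      (σ i).2 ∈ Icc ((2:ℝ)^(-(k:ℝ))/10 - (2:ℝ)^(-(k:ℝ))/40) ((2:ℝ)^(-(k:ℝ))/10))
    (hτ : ∀ i, (τ i).1 ∈ Icc ((2:ℝ)^(-((k:ℝ)+1))/10 - (2:ℝ)^(-((k:ℝ)+1))/40)
        ((2:ℝ)^(-((k:ℝ)+1))/10) ∧
      (τ i).2 ∈ Icc ((2:ℝ)^(-((k:ℝ)+1))/10 - (2:ℝ)^(-((k:ℝ)+1))/40) ((2:ℝ)^(-((k:ℝ)+1))/10))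
    (v : Fin 4 → ℝ × ℝ)
    (hv : v = fun i =>
      (![w, w + ((2:ℝ)^(-(k:ℝ)), 0), w + ((2:ℝ)^(-(k:ℝ)), (2:ℝ)^(-(k:ℝ))),
        w + (0, (2:ℝ)^(-(k:ℝ)))] : Fin 4 → ℝ × ℝ) i + σ i)
    (vhat : Fin 8 → ℝ × ℝ)
    (hvhat : vhat = fun i =>
      (![w, w + ((2:ℝ)^(-(k:ℝ))/2, 0), w + ((2:ℝ)^(-(k:ℝ)), 0),
        w + ((2:ℝ)^(-(k:ℝ)), (2:ℝ)^(-(k:ℝ))/2), w + ((2:ℝ)^(-(k:ℝ)), (2:ℝ)^(-(k:ℝ))),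
        w + ((2:ℝ)^(-(k:ℝ))/2, (2:ℝ)^(-(k:ℝ))), w + (0, (2:ℝ)^(-(k:ℝ))),
        w + (0, (2:ℝ)^(-(k:ℝ))/2)] : Fin 8 → ℝ × ℝ) i + τ i) :
    (∀ i : Fin 4, ∀ x ∈ segment ℝ (v i) (v (i + 1)),
      ∀ y ∈ segment ℝ (vhat ((2 * (i : ℕ) : ℕ) : Fin 8)) (vhat ((2 * (i : ℕ) : ℕ) + 1 : Fin 8)) ∪
          segment ℝ (vhat ((2 * (i : ℕ) : ℕ) + 1 : Fin 8)) (vhat ((2 * (i : ℕ) : ℕ) + 2 : Fin 8)),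
        (2:ℝ)^(-(k:ℝ))/40 ≤ dist x y) ∧
    ∃ S T : ℝ × ℝ, S ≠ T ∧
      (⋃ i : Fin 4, segment ℝ (v i) (v (i + 1))) ∩
        (⋃ i : Fin 8, segment ℝ (vhat i) (vhat (i + 1))) = {S, T} := by
  have hδ : 0 < (2:ℝ) ^ (-(k:ℝ)) := by positivity
  rw [neg_add, Real.rpow_add two_pos, Real.rpow_neg_one, ← div_eq_mul_inv] at hτ
  generalize (2:ℝ) ^ (-(k:ℝ)) = δ at hδ hσ hτ hv hvhat ⊢
  have hσ' : ∀ i, σ i ∈ shiftBox δ := fun i => by rw [shiftBox, ← Icc_prod_Icc]; exact hσ i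
  have hτ' : ∀ j, τ j ∈ shiftBox (δ / 2) := fun j => by rw [shiftBox, ← Icc_prod_Icc]; exact hτ j
  obtain rfl : v = quadVertex w δ σ := hv
  obtain rfl : vhat = childVertex w δ τ := hvhat
  obtain ⟨S, hS⟩ := exists_bottom_inter_eq_singleton (w := w) hδ hσ' hτ'
  obtain ⟨T, hT⟩ := exists_left_inter_eq_singleton (w := w) hδ hσ' hτ'
  have hST : S ≠ T := dist_pos.1 <| (by positivity : 0 < δ / 40).trans_le <|
    le_dist_of_mem_sides (i := 0) (j := 5) hδ hσ' hτ' (hS.ge (mem_singleton S)).1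
      (hT.ge (mem_singleton T)).2 (by decide)
  refine ⟨fun i x hx y hy => le_dist_of_mem_corresponding_sides hδ hσ' hτ' i hx hy, S, T, hST, ?_⟩
  rw [iUnion_segment_inter_iUnion_segment hδ hσ' hτ', hS, hT, singleton_union]

end
end
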